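/- In A(SU_q(3)), set z_j := u³_j and z_j^∗ := (u³_j)^∗ (the quantum minors) for j = 1, 2, 3. Then the following relations of the quantum 5-sphere hold: z_i z_j = q z_j z_i for i < j; z_i^∗ z_j = q z_j z_i^∗ for all i ≠ j; z₁^∗ z₁ = z₁ z₁^∗; z₂^∗ z₂ − z₂ z₂^∗ = (1 − q²) z₁ z₁^∗; and z₃^∗ z₃ − z₃ z₃^∗ = (1 − q²)(z₁ z₁^∗ + z₂ z₂^∗). (These are the defining relations of the ∗-algebra A(S⁵_q), verified for its generators z_j = u³_j inside A(SU_q(3)).) -/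

import Mathlib

/-- The generator `u^i_j` of the free algebra on nine letters. -/
noncomputable def ugen (i j : Fin 3) : FreeAlgebra ℂ (Fin 3 × Fin 3) :=
  FreeAlgebra.ι ℂ (i, j)

/-- The number of inversions (the length) of a permutation of `{1,2,3}`. -/
def invCount (σ : Equiv.Perm (Fin 3)) : ℕ :=
  (Finset.univ.filter fun p : Fin 3 × Fin 3 => p.1 < p.2 ∧ σ p.2 < σ p.1).card

/-- The defining relations of the coordinate algebra `A(SU_q(3))`. -/
inductive SURel (q : ℂ) : FreeAlgebra ℂ (Fin 3 × Fin 3) → FreeAlgebra ℂ (Fin 3 × Fin 3) → Prop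
  | col (i j k : Fin 3) (h : i < j) :
      SURel q (ugen i k * ugen j k) (q • (ugen j k * ugen i k))
  | row (i j k : Fin 3) (h : i < j) :
      SURel q (ugen k i * ugen k j) (q • (ugen k j * ugen k i))
  | comm (i j k l : Fin 3) (hij : i < j) (hkl : k < l) :
      SURel q (ugen i l * ugen j k) (ugen j k * ugen i l)
  | qcomm (i j k l : Fin 3) (hij : i < j) (hkl : k < l) :
      SURel q (ugen i k * ugen j l - ugen j l * ugen i k)
        ((q - q⁻¹) • (ugen i l * ugen j k))
  | det :
      SURel q
        (∑ σ : Equiv.Perm (Fin 3),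
          ((-q) ^ invCount σ) • (ugen 0 (σ 0) * ugen 1 (σ 1) * ugen 2 (σ 2))) 1

/-- The coordinate algebra `A(SU_q(3))`. -/
abbrev SUq3 (q : ℂ) := RingQuot (SURel q)

/-- The ordered pair of elements of `{0,1,2}` complementary to `i`. -/
def compl3 (i : Fin 3) : Fin 3 × Fin 3 :=
  if i = 0 then (1, 2) else if i = 1 then (0, 2) else (0, 1)

/-- The quantum minor `(u^i_j)^∗ = (−q)^{j−i}(u^{k₁}_{l₁} u^{k₂}_{l₂} − q u^{k₁}_{l₂} u^{k₂}_{l₁})`,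
where `{k₁ < k₂} = {1,2,3} \ {i}` and `{l₁ < l₂} = {1,2,3} \ {j}`. -/
noncomputable def uminor (q : ℂ) (i j : Fin 3) : FreeAlgebra ℂ (Fin 3 × Fin 3) :=
  ((-q) ^ ((j : ℤ) - (i : ℤ))) •
    (ugen (compl3 i).1 (compl3 j).1 * ugen (compl3 i).2 (compl3 j).2 -
      q • (ugen (compl3 i).1 (compl3 j).2 * ugen (compl3 i).2 (compl3 j).1))

/-! The quantum minor `z_j^∗` is, up to the scalar `(-q)^{j-3}`, the `2 × 2` quantum minor
`D_{kl} = u¹_k u²_l - q u¹_l u²_k` of the first two rows in the complementary columns `k < l`.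
Everything then reduces to commuting such a minor past an entry `u^r_m` of a lower row, which only
needs the quadratic relations of a quantum matrix: `D_{kl}` `q`-commutes with `u^r_k` and `u^r_l`,
commutes with `u^r_m` for `m < k`, and for `k < m < l` or `l < m` the commutator is a
`(q - q⁻¹)`-multiple of products of other minors of the same two rows with entries of row `r`. -/

/-- The quadratic relations of the FRT quantum matrix algebra `A(M_q)`. -/
structure IsQuantumMatrix {K ι κ A : Type*} [Field K] [LinearOrder ι] [LinearOrder κ] [Ring A]
    [Algebra K A] (q : K) (u : ι → κ → A) : Prop where
  col : ∀ {i j : ι} (k : κ), i < j → u i k * u j k = q • (u j k * u i k)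
  row : ∀ (k : ι) {i j : κ}, i < j → u k i * u k j = q • (u k j * u k i)
  comm : ∀ {i j : ι} {k l : κ}, i < j → k < l → u i l * u j k = u j k * u i l
  qcomm : ∀ {i j : ι} {k l : κ}, i < j → k < l →
    u i k * u j l = u j l * u i k + (q - q⁻¹) • (u i l * u j k)

section QuantumMinor

variable {K ι κ A : Type*} [Field K] [LinearOrder ι] [LinearOrder κ] [Ring A] [Algebra K A]

def quantumMinor (q : K) (u : ι → κ → A) (i j : ι) (k l : κ) : A :=
  u i k * u j l - q • (u i l * u j k)

namespace IsQuantumMatrix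

variable {q : K} {u : ι → κ → A} {i j r : ι} {k l m : κ}

theorem quantumMinor_mul_fst (hu : IsQuantumMatrix q u) (hir : i < r) (hjr : j < r)
    (hkl : k < l) :
    quantumMinor q u i j k l * u r k = q • (u r k * quantumMinor q u i j k l) := by
  have h₁ : u i k * u j l * u r k = q • (u r k * (u i k * u j l)) := by
    rw [mul_assoc, hu.comm hjr hkl, ← mul_assoc, hu.col k hir, smul_mul_assoc, mul_assoc]
  have h₂ : u i l * u j k * u r k = q • (u r k * (u i l * u j k)) := by
    rw [mul_assoc, hu.col k hjr, mul_smul_comm, ← mul_assoc, hu.comm hir hkl, mul_assoc]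
  rw [quantumMinor, sub_mul, smul_mul_assoc, h₁, h₂]
  simp only [mul_sub, mul_smul_comm, smul_sub, smul_smul]

theorem quantumMinor_mul_snd (hu : IsQuantumMatrix q u) (hir : i < r) (hjr : j < r)
    (hkl : k < l) :
    quantumMinor q u i j k l * u r l = q • (u r l * quantumMinor q u i j k l) := by
  have h₁ : u i k * u j l * u r l
      = q • (u r l * (u i k * u j l)) + (q * (q - q⁻¹)) • (u i l * (u j l * u r k)) := by
    rw [mul_assoc, hu.col l hjr, mul_smul_comm, ← mul_assoc, hu.qcomm hir hkl, add_mul,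
      smul_mul_assoc, mul_assoc (u i l), (hu.comm hjr hkl).symm, smul_add, smul_smul, mul_assoc]
  have h₂ : u i l * u j k * u r l
      = q • (u r l * (u i l * u j k)) + (q - q⁻¹) • (u i l * (u j l * u r k)) := by
    rw [mul_assoc, hu.qcomm hjr hkl, mul_add, mul_smul_comm, ← mul_assoc, hu.col l hir,
      smul_mul_assoc, mul_assoc]
  rw [quantumMinor, sub_mul, smul_mul_assoc, h₁, h₂]
  simp only [mul_sub, mul_smul_comm, smul_sub, smul_add, smul_smul]
  match_scalars <;> ring

theorem quantumMinor_mul_of_lt_fst (hu : IsQuantumMatrix q u) (hir : i < r) (hjr : j < r)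
    (hmk : m < k) (hkl : k < l) :
    quantumMinor q u i j k l * u r m = u r m * quantumMinor q u i j k l := by
  have hml := hmk.trans hkl
  have h₁ : u i k * u j l * u r m = u r m * (u i k * u j l) := by
    rw [mul_assoc, hu.comm hjr hml, ← mul_assoc, hu.comm hir hmk, mul_assoc]
  have h₂ : u i l * u j k * u r m = u r m * (u i l * u j k) := by
    rw [mul_assoc, hu.comm hjr hmk, ← mul_assoc, hu.comm hir hml, mul_assoc]
  rw [quantumMinor, sub_mul, smul_mul_assoc, h₁, h₂, mul_sub, mul_smul_comm]

theorem quantumMinor_mul_sub_mul_of_lt_of_lt (hu : IsQuantumMatrix q u) (hir : i < r)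
    (hjr : j < r) (hkm : k < m) (hml : m < l) :
    quantumMinor q u i j k l * u r m - u r m * quantumMinor q u i j k l
      = (q - q⁻¹) • (quantumMinor q u i j m l * u r k) := by
  have hkl := hkm.trans hml
  have h₁ : u i k * u j l * u r m
      = u r m * (u i k * u j l) + (q - q⁻¹) • (u i m * (u j l * u r k)) := by
    rw [mul_assoc, hu.comm hjr hml, ← mul_assoc, hu.qcomm hir hkm, add_mul, smul_mul_assoc,
      mul_assoc (u i m), ← hu.comm hjr hkl, mul_assoc]
  have h₂ : u i l * u j k * u r m
      = u r m * (u i l * u j k) + (q - q⁻¹) • (u i l * (u j m * u r k)) := by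
    rw [mul_assoc, hu.qcomm hjr hkm, mul_add, mul_smul_comm, ← mul_assoc, hu.comm hir hml,
      mul_assoc]
  rw [quantumMinor, quantumMinor, sub_mul, smul_mul_assoc, h₁, h₂]
  simp only [mul_sub, mul_smul_comm, smul_sub, smul_add, smul_smul, sub_mul, smul_mul_assoc,
    mul_assoc]
  match_scalars <;> ring

theorem quantumMinor_mul_sub_mul_of_snd_lt (hu : IsQuantumMatrix q u) (hq : q ≠ 0)
    (hir : i < r) (hjr : j < r) (hkl : k < l) (hlm : l < m) :
    quantumMinor q u i j k l * u r m - u r m * quantumMinor q u i j k l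
      = (q - q⁻¹) • (u r l * quantumMinor q u i j k m
          - q⁻¹ • (u r k * quantumMinor q u i j l m)) := by
  have hkm := hkl.trans hlm
  have h₁ : u i k * u j l * u r m
      = u r m * (u i k * u j l) + (q - q⁻¹) • (u r k * (u i m * u j l))
        + ((q - q⁻¹) • (u r l * (u i k * u j m))
          + ((q - q⁻¹) * (q - q⁻¹)) • (u r k * (u i l * u j m))) := by
    have hb : u i k * (u r m * u j l)
        = u r m * (u i k * u j l) + (q - q⁻¹) • (u r k * (u i m * u j l)) := by
      rw [← mul_assoc, hu.qcomm hir hkm, add_mul, smul_mul_assoc, hu.comm hir hkm,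
        mul_assoc, mul_assoc]
    have hg : u i k * (u j m * u r l)
        = u r l * (u i k * u j m) + (q - q⁻¹) • (u r k * (u i l * u j m)) := by
      rw [hu.comm hjr hlm, ← mul_assoc, hu.qcomm hir hkl, add_mul, smul_mul_assoc,
        hu.comm hir hkl, mul_assoc, mul_assoc]
    rw [mul_assoc, hu.qcomm hjr hlm, mul_add, mul_smul_comm, hb, hg, smul_add, smul_smul]
  have h₂ : u i l * u j k * u r m
      = u r m * (u i l * u j k) + (q - q⁻¹) • (u r l * (u i m * u j k))
        + (q - q⁻¹) • (u r k * (u i l * u j m)) := by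
    have hc : u i l * (u r m * u j k)
        = u r m * (u i l * u j k) + (q - q⁻¹) • (u r l * (u i m * u j k)) := by
      rw [← mul_assoc, hu.qcomm hir hlm, add_mul, smul_mul_assoc, hu.comm hir hlm,
        mul_assoc, mul_assoc]
    rw [mul_assoc, hu.qcomm hjr hkm, mul_add, mul_smul_comm, hc, hu.comm hjr hkm,
      ← mul_assoc (u i l), hu.comm hir hkl, mul_assoc]
  rw [quantumMinor, quantumMinor, quantumMinor, sub_mul, smul_mul_assoc, h₁, h₂]
  simp only [mul_sub, mul_smul_comm, smul_sub, smul_add, smul_smul]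
  match_scalars <;> field_simp <;> ring

end IsQuantumMatrix

end QuantumMinor

noncomputable def SUq3.gen (q : ℂ) (i j : Fin 3) : SUq3 q :=
  RingQuot.mkAlgHom ℂ (SURel q) (ugen i j)

theorem SUq3.isQuantumMatrix_gen (q : ℂ) : IsQuantumMatrix q (SUq3.gen q) where
  col k h := by
    simpa [SUq3.gen] using RingQuot.mkAlgHom_rel ℂ (SURel.col (q := q) _ _ k h)
  row k _ _ h := by
    simpa [SUq3.gen] using RingQuot.mkAlgHom_rel ℂ (SURel.row (q := q) _ _ k h)
  comm hij hkl := by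
    simpa [SUq3.gen] using RingQuot.mkAlgHom_rel ℂ (SURel.comm (q := q) _ _ _ _ hij hkl)
  qcomm hij hkl := by
    rw [← sub_eq_iff_eq_add']
    simpa [SUq3.gen] using RingQuot.mkAlgHom_rel ℂ (SURel.qcomm (q := q) _ _ _ _ hij hkl)

theorem compl3_fst_lt_snd (i : Fin 3) : (compl3 i).1 < (compl3 i).2 := by
  fin_cases i <;> decide

theorem eq_compl3_fst_or_eq_compl3_snd {i j : Fin 3} (h : i ≠ j) :
    j = (compl3 i).1 ∨ j = (compl3 i).2 := by
  fin_cases i <;> fin_cases j <;> simp_all [compl3]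

theorem SUq3.mkAlgHom_uminor_two (q : ℂ) (j : Fin 3) :
    RingQuot.mkAlgHom ℂ (SURel q) (uminor q 2 j)
      = (-q) ^ ((j : ℤ) - 2) • quantumMinor q (SUq3.gen q) 0 1 (compl3 j).1 (compl3 j).2 := by
  simp [uminor, quantumMinor, SUq3.gen, show compl3 2 = (0, 1) from rfl]

theorem SUq3.mkAlgHom_uminor_two_mul_gen {q : ℂ} {i j : Fin 3} (h : i ≠ j) :
    RingQuot.mkAlgHom ℂ (SURel q) (uminor q 2 i) * SUq3.gen q 2 j
      = q • (SUq3.gen q 2 j * RingQuot.mkAlgHom ℂ (SURel q) (uminor q 2 i)) := by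
  have hu := SUq3.isQuantumMatrix_gen q
  rw [SUq3.mkAlgHom_uminor_two, smul_mul_assoc, mul_smul_comm, smul_comm]
  congr 1
  rcases eq_compl3_fst_or_eq_compl3_snd h with rfl | rfl
  · exact hu.quantumMinor_mul_fst (by decide) (by decide) (compl3_fst_lt_snd i)
  · exact hu.quantumMinor_mul_snd (by decide) (by decide) (compl3_fst_lt_snd i)

theorem stmt_7_general (q : ℝ) (hq0 : 0 < q)
    (z zs : Fin 3 → SUq3 (q : ℂ))
    (hz : ∀ j, z j = RingQuot.mkAlgHom ℂ (SURel (q : ℂ)) (ugen 2 j))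
    (hzs : ∀ j, zs j = RingQuot.mkAlgHom ℂ (SURel (q : ℂ)) (uminor (q : ℂ) 2 j)) :
    (∀ i j : Fin 3, i < j → z i * z j = (q : ℂ) • (z j * z i)) ∧
    (∀ i j : Fin 3, i ≠ j → zs i * z j = (q : ℂ) • (z j * zs i)) ∧
    zs 0 * z 0 = z 0 * zs 0 ∧
    zs 1 * z 1 - z 1 * zs 1 = (1 - (q : ℂ) ^ 2) • (z 0 * zs 0) ∧
    zs 2 * z 2 - z 2 * zs 2 = (1 - (q : ℂ) ^ 2) • (z 0 * zs 0 + z 1 * zs 1) := by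
  have hq : (q : ℂ) ≠ 0 := Complex.ofReal_ne_zero.mpr hq0.ne'
  have hu := SUq3.isQuantumMatrix_gen (q : ℂ)
  obtain rfl : z = SUq3.gen q 2 := funext hz
  set D := quantumMinor (q : ℂ) (SUq3.gen q) 0 1
  have hzs₀ : zs 0 = ((q : ℂ) ^ 2)⁻¹ • D 1 2 := by
    rw [hzs, SUq3.mkAlgHom_uminor_two, show compl3 0 = (1, 2) from rfl]
    norm_num
    rfl
  have hzs₁ : zs 1 = (-(q : ℂ)⁻¹) • D 0 2 := by
    rw [hzs, SUq3.mkAlgHom_uminor_two, show compl3 1 = (0, 2) from rfl]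
    norm_num
    rfl
  have hzs₂ : zs 2 = D 0 1 := by
    rw [hzs, SUq3.mkAlgHom_uminor_two, show compl3 2 = (0, 1) from rfl]
    norm_num
    rfl
  have hD₁₂ : D 1 2 * SUq3.gen q 2 0 = SUq3.gen q 2 0 * D 1 2 :=
    hu.quantumMinor_mul_of_lt_fst (by decide) (by decide) (by decide) (by decide)
  refine ⟨fun i j hij => hu.row 2 hij, fun i j hij => ?_, ?_, ?_, ?_⟩
  · rw [hzs]
    exact SUq3.mkAlgHom_uminor_two_mul_gen hij
  · rw [hzs₀, smul_mul_assoc, hD₁₂, mul_smul_comm]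
  · have h : D 0 2 * SUq3.gen q 2 1
        = SUq3.gen q 2 1 * D 0 2 + ((q : ℂ) - (q : ℂ)⁻¹) • (D 1 2 * SUq3.gen q 2 0) :=
      sub_eq_iff_eq_add'.mp <|
        hu.quantumMinor_mul_sub_mul_of_lt_of_lt (by decide) (by decide) (by decide) (by decide)
    rw [hzs₁, hzs₀, smul_mul_assoc, mul_smul_comm, h, hD₁₂]
    simp only [smul_add, mul_smul_comm, smul_smul]
    match_scalars <;> field_simp <;> ring
  · rw [hzs₂, hzs₁, hzs₀,
      hu.quantumMinor_mul_sub_mul_of_snd_lt hq (by decide) (by decide) (by decide) (by decide)]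
    simp only [mul_smul_comm, smul_add, smul_sub, smul_smul]
    match_scalars <;> field_simp <;> ring

/-- With `z_j := u³_j` and `z_j^∗ := (u³_j)^∗` (the quantum minors) inside
`A(SU_q(3))`, the defining relations of the quantum 5-sphere hold:
`z_i z_j = q z_j z_i` for `i < j`; `z_i^∗ z_j = q z_j z_i^∗` for `i ≠ j`;
`z₁^∗ z₁ = z₁ z₁^∗`; `z₂^∗ z₂ − z₂ z₂^∗ = (1 − q²) z₁ z₁^∗`; and
`z₃^∗ z₃ − z₃ z₃^∗ = (1 − q²)(z₁ z₁^∗ + z₂ z₂^∗)`. -/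
theorem stmt_7 (q : ℝ) (hq0 : 0 < q) (hq1 : q < 1)
    (z zs : Fin 3 → SUq3 (q : ℂ))
    (hz : ∀ j, z j = RingQuot.mkAlgHom ℂ (SURel (q : ℂ)) (ugen 2 j))
    (hzs : ∀ j, zs j = RingQuot.mkAlgHom ℂ (SURel (q : ℂ)) (uminor (q : ℂ) 2 j)) :
    (∀ i j : Fin 3, i < j → z i * z j = (q : ℂ) • (z j * z i)) ∧
    (∀ i j : Fin 3, i ≠ j → zs i * z j = (q : ℂ) • (z j * zs i)) ∧
    zs 0 * z 0 = z 0 * zs 0 ∧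
    zs 1 * z 1 - z 1 * zs 1 = (1 - (q : ℂ) ^ 2) • (z 0 * zs 0) ∧
    zs 2 * z 2 - z 2 * zs 2 = (1 - (q : ℂ) ^ 2) • (z 0 * zs 0 + z 1 * zs 1) :=
  stmt_7_general q hq0 z zs hz hzs
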